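/- arXiv:2509.15676 — 2 statements merged into one kernel-verified Lean document; each statement's English description precedes it below -/
import Mathlib

section
/- Let β > 0 and define g(S) = log det(β I + Σ_{x ∈ S} x xᵀ). Then g is submodular: for all finite sets S ⊆ L ⊆ R^d and x ∉ L, g(S ∪ {x}) - g(S) ≥ g(L ∪ {x}) - g(L). -/
/-!
With `V_T = regularizedGram β T`, adding `x ∉ T` multiplies `det V_T` by `1 + xᵀ V_T⁻¹ x`
(matrix determinant lemma), so the marginal gain of `x` is `log (1 + xᵀ V_T⁻¹ x)`. For `S ⊆ L`
the difference `V_L - V_S` is positive semidefinite, and `A ↦ xᵀ A⁻¹ x` is antitone in that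
order because of the variational formula `xᵀ A⁻¹ x = max_y (2 yᵀ x - yᵀ A y)`, the maximum being
attained at `y = A⁻¹ x`.
-/

open Matrix

namespace Matrix

variable {n : Type*} [Fintype n] [DecidableEq n]

theorem det_add_vecMulVec {R : Type*} [CommRing R] {A : Matrix n n R} (hA : IsUnit A.det)
    (u v : n → R) : (A + vecMulVec u v).det = A.det * (1 + v ⬝ᵥ A⁻¹ *ᵥ u) := by
  rw [vecMulVec_eq Unit, det_add_replicateCol_mul_replicateRow hA, Matrix.mul_assoc,
    ← replicateCol_mulVec, replicateRow_mul_replicateCol, det_unique (1 + of _)]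
  rfl

theorem PosSemidef.dotProduct_inv_mulVec_nonneg {A : Matrix n n ℝ} (hA : A.PosSemidef)
    (x : n → ℝ) : 0 ≤ x ⬝ᵥ A⁻¹ *ᵥ x := by
  simpa using hA.inv.dotProduct_mulVec_nonneg x

theorem PosDef.two_mul_dotProduct_sub_le {A : Matrix n n ℝ} (hA : A.PosDef) (x y : n → ℝ) :
    2 * (y ⬝ᵥ x) - y ⬝ᵥ A *ᵥ y ≤ x ⬝ᵥ A⁻¹ *ᵥ x := by
  set z := A⁻¹ *ᵥ x
  have hAz : A *ᵥ z = x := by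
    rw [mulVec_mulVec, mul_nonsing_inv _ (isUnit_iff_ne_zero.mpr hA.det_pos.ne'), one_mulVec]
  have hsymm : z ⬝ᵥ A *ᵥ y = y ⬝ᵥ A *ᵥ z := by
    rw [dotProduct_mulVec, ← mulVec_transpose, isHermitian_iff_isSymm.mp hA.isHermitian,
      dotProduct_comm]
  have hnonneg := hA.posSemidef.dotProduct_mulVec_nonneg (y - z)
  simp only [star_trivial, mulVec_sub, dotProduct_sub, sub_dotProduct, hsymm, hAz] at hnonneg
  rw [dotProduct_comm z x] at hnonneg
  linarith

theorem PosDef.dotProduct_inv_mulVec_antitone {A B : Matrix n n ℝ} (hA : A.PosDef)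
    (hAB : (B - A).PosSemidef) (x : n → ℝ) : x ⬝ᵥ B⁻¹ *ᵥ x ≤ x ⬝ᵥ A⁻¹ *ᵥ x := by
  have hB : B.PosDef := by simpa using hA.add_posSemidef hAB
  set y := B⁻¹ *ᵥ x
  have hBy : B *ᵥ y = x := by
    rw [mulVec_mulVec, mul_nonsing_inv _ (isUnit_iff_ne_zero.mpr hB.det_pos.ne'), one_mulVec]
  have hBA := hAB.dotProduct_mulVec_nonneg y
  simp only [star_trivial, sub_mulVec, dotProduct_sub] at hBA
  calc x ⬝ᵥ y = 2 * (y ⬝ᵥ x) - y ⬝ᵥ B *ᵥ y := by rw [hBy, dotProduct_comm y x]; ring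
    _ ≤ 2 * (y ⬝ᵥ x) - y ⬝ᵥ A *ᵥ y := by linarith
    _ ≤ x ⬝ᵥ A⁻¹ *ᵥ x := hA.two_mul_dotProduct_sub_le x y

end Matrix

section RegularizedGram

variable {n : Type*} [Fintype n]

theorem posSemidef_sum_vecMulVec_self (S : Finset (n → ℝ)) :
    (∑ v ∈ S, vecMulVec v v).PosSemidef :=
  posSemidef_sum S fun v _ => by simpa using posSemidef_vecMulVec_self_star v

variable [DecidableEq n]

noncomputable def regularizedGram (β : ℝ) (S : Finset (n → ℝ)) : Matrix n n ℝ :=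
  β • 1 + ∑ v ∈ S, vecMulVec v v

theorem posDef_regularizedGram {β : ℝ} (hβ : 0 < β) (S : Finset (n → ℝ)) :
    (regularizedGram β S).PosDef :=
  (PosDef.one.smul hβ).add_posSemidef (posSemidef_sum_vecMulVec_self S)

theorem regularizedGram_insert (β : ℝ) {S : Finset (n → ℝ)} {x : n → ℝ} (hx : x ∉ S) :
    regularizedGram β (insert x S) = regularizedGram β S + vecMulVec x x := by
  rw [regularizedGram, regularizedGram, Finset.sum_insert hx]
  abel

theorem posSemidef_regularizedGram_sub_of_subset (β : ℝ) {S L : Finset (n → ℝ)} (h : S ⊆ L) :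
    (regularizedGram β L - regularizedGram β S).PosSemidef := by
  have hsub : regularizedGram β L - regularizedGram β S = ∑ v ∈ L \ S, vecMulVec v v := by
    rw [regularizedGram, regularizedGram, ← Finset.sum_sdiff h]
    abel
  exact hsub ▸ posSemidef_sum_vecMulVec_self _

theorem log_det_regularizedGram_insert_sub {β : ℝ} (hβ : 0 < β) {S : Finset (n → ℝ)}
    {x : n → ℝ} (hx : x ∉ S) :
    Real.log (regularizedGram β (insert x S)).det - Real.log (regularizedGram β S).det =
      Real.log (1 + x ⬝ᵥ (regularizedGram β S)⁻¹ *ᵥ x) := by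
  have hV := posDef_regularizedGram hβ S
  have hq := hV.posSemidef.dotProduct_inv_mulVec_nonneg x
  rw [regularizedGram_insert β hx, det_add_vecMulVec (isUnit_iff_ne_zero.mpr hV.det_pos.ne'),
    Real.log_mul hV.det_pos.ne' (by positivity), add_sub_cancel_left]

end RegularizedGram

/-- Submodularity (diminishing returns) of `g(S) = log det (β I + Σ_{v∈S} v vᵀ)`. -/
theorem logdet_submodular {d : ℕ} (β : ℝ) (hβ : 0 < β)
    (g : Finset (Fin d → ℝ) → ℝ)
    (hg : ∀ S : Finset (Fin d → ℝ),
      g S = Real.log (β • (1 : Matrix (Fin d) (Fin d) ℝ) + ∑ v ∈ S, vecMulVec v v).det)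
    (S L : Finset (Fin d → ℝ)) (hSL : S ⊆ L) (x : Fin d → ℝ) (hx : x ∉ L) :
    g (insert x L) - g L ≤ g (insert x S) - g S := by
  have hg' : ∀ T, g T = Real.log (regularizedGram β T).det := hg
  have hxS : x ∉ S := fun h => hx (hSL h)
  rw [hg', hg', hg', hg', log_det_regularizedGram_insert_sub hβ hx,
    log_det_regularizedGram_insert_sub hβ hxS]
  have hq := (posDef_regularizedGram hβ L).posSemidef.dotProduct_inv_mulVec_nonneg x
  have hanti := (posDef_regularizedGram hβ S).dotProduct_inv_mulVec_antitone
    (posSemidef_regularizedGram_sub_of_subset β hSL) x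
  exact Real.log_le_log (by positivity) (by linarith)
end

section
/- Let f be a monotone nondecreasing set function on a finite ground set X with f(∅) = 0 and submodularity ratio γ ∈ (0,1] at cardinality k (i.e., for all disjoint S, L with |L| ≤ k, Σ_{x ∈ L} (f(S ∪ {x}) - f(S)) ≥ γ·(f(S ∪ L) - f(S))). Then the greedy algorithm which at each of k steps adds the element of maximum marginal gain returns a set S_greedy with f(S_greedy) ≥ (1 - e^{-γ})·max_{|S| ≤ k} f(S). -/
/-!
Each greedy step closes at least a `γ / k` fraction of the gap `f T - f (S i)`: applying the ratio
bound to `L = T \ S i` bounds `γ` times the gap by the marginal gains of at most `k` elements, each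
of which is at most the greedy gain. After `k` steps the gap is at most
`(1 - γ / k) ^ k * f T ≤ exp (-γ) * f T`.
-/

open Finset

section Greedy

variable {X : Type*} [DecidableEq X]

/-- `γ` is at most the submodularity ratio of `f` at cardinality `k`. -/
def HasSubmodularityRatio (f : Finset X → ℝ) (k : ℕ) (γ : ℝ) : Prop :=
  ∀ S L : Finset X, Disjoint S L → #L ≤ k →
    γ * (f (S ∪ L) - f S) ≤ ∑ x ∈ L, (f (insert x S) - f S)

variable {f : Finset X → ℝ} {k : ℕ} {γ : ℝ} {A T : Finset X} {x : X}

theorem HasSubmodularityRatio.mul_sub_le_mul_greedy_gain (hratio : HasSubmodularityRatio f k γ)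
    (hγ : 0 ≤ γ) (hf : Monotone f) (hT : #T ≤ k)
    (hx : ∀ y ∉ A, f (insert y A) ≤ f (insert x A)) :
    γ * (f T - f A) ≤ k * (f (insert x A) - f A) := by
  have hgain : 0 ≤ f (insert x A) - f A := sub_nonneg.2 (hf (subset_insert x A))
  have hL : #(T \ A) ≤ k := (card_le_card sdiff_subset).trans hT
  calc γ * (f T - f A) ≤ γ * (f (A ∪ (T \ A)) - f A) := by
        gcongr
        rw [union_sdiff_self_eq_union]
        exact hf subset_union_right
    _ ≤ ∑ y ∈ T \ A, (f (insert y A) - f A) := hratio A (T \ A) disjoint_sdiff hL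
    _ ≤ #(T \ A) • (f (insert x A) - f A) :=
        sum_le_card_nsmul _ _ _ fun y hy ↦ sub_le_sub_right (hx y (mem_sdiff.1 hy).2) _
    _ ≤ k * (f (insert x A) - f A) := by
        rw [nsmul_eq_mul]
        gcongr

theorem HasSubmodularityRatio.sub_greedy_le_one_sub_div_mul (hratio : HasSubmodularityRatio f k γ)
    (hγ : 0 ≤ γ) (hf : Monotone f) (hk : 0 < k) (hT : #T ≤ k)
    (hx : ∀ y ∉ A, f (insert y A) ≤ f (insert x A)) :
    f T - f (insert x A) ≤ (1 - γ / k) * (f T - f A) := by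
  have hk' : (0 : ℝ) < k := by exact_mod_cast hk
  have hstep : γ / k * (f T - f A) ≤ f (insert x A) - f A := by
    rw [div_mul_eq_mul_div, div_le_iff₀ hk', mul_comm _ (k : ℝ)]
    exact hratio.mul_sub_le_mul_greedy_gain hγ hf hT hx
  linarith

end Greedy

theorem greedy_approx_submod_ratio_general {X : Type*} [DecidableEq X]
    (f : Finset X → ℝ) (k : ℕ) (γ : ℝ) (hγ0 : 0 < γ) (hγ1 : γ ≤ 1)
    (hf0 : f ∅ = 0)
    (hmono : ∀ S T : Finset X, S ⊆ T → f S ≤ f T)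
    (hratio : ∀ S L : Finset X, Disjoint S L → L.card ≤ k →
      γ * (f (S ∪ L) - f S) ≤ ∑ x ∈ L, (f (insert x S) - f S))
    (S : ℕ → Finset X) (hS0 : S 0 = ∅)
    (hgreedy : ∀ i < k, ∃ x ∉ S i, S (i + 1) = insert x (S i) ∧
      ∀ y ∉ S i, f (insert y (S i)) ≤ f (insert x (S i))) :
    ∀ T : Finset X, T.card ≤ k → (1 - Real.exp (-γ)) * f T ≤ f (S k) := by
  intro T hT
  have hfT : 0 ≤ f T := hf0 ▸ hmono ∅ T (empty_subset T)
  rcases Nat.eq_zero_or_pos k with rfl | hk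
  · simp [card_eq_zero.1 (Nat.le_zero.1 hT), hS0, hf0]
  have hγk : γ ≤ k := hγ1.trans (by exact_mod_cast hk)
  have hgap : f T - f (S k) ≤ (1 - γ / k) ^ k * (f T - f (S 0)) := by
    refine le_geom (u := fun i ↦ f T - f (S i)) (sub_nonneg.2 (div_le_one_of_le₀ hγk k.cast_nonneg)) k
      fun i hi ↦ ?_
    obtain ⟨x, -, hSx, hmax⟩ := hgreedy i hi
    rw [hSx]
    exact HasSubmodularityRatio.sub_greedy_le_one_sub_div_mul hratio hγ0.le hmono hk hT hmax
  rw [hS0, hf0, sub_zero] at hgap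
  calc (1 - Real.exp (-γ)) * f T = f T - Real.exp (-γ) * f T := by ring
    _ ≤ f T - (1 - γ / k) ^ k * f T := by gcongr; exact Real.one_sub_div_pow_le_exp_neg hγk
    _ ≤ f (S k) := by linarith

/-- Greedy guarantee for monotone set functions with submodularity ratio `γ`. -/
theorem greedy_approx_submod_ratio {X : Type*} [Fintype X] [DecidableEq X]
    (f : Finset X → ℝ) (k : ℕ) (γ : ℝ) (hγ0 : 0 < γ) (hγ1 : γ ≤ 1)
    (hf0 : f ∅ = 0)
    (hmono : ∀ S T : Finset X, S ⊆ T → f S ≤ f T)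
    (hratio : ∀ S L : Finset X, Disjoint S L → L.card ≤ k →
      γ * (f (S ∪ L) - f S) ≤ ∑ x ∈ L, (f (insert x S) - f S))
    (S : ℕ → Finset X) (hS0 : S 0 = ∅)
    (hgreedy : ∀ i < k, ∃ x ∉ S i, S (i + 1) = insert x (S i) ∧
      ∀ y ∉ S i, f (insert y (S i)) ≤ f (insert x (S i))) :
    ∀ T : Finset X, T.card ≤ k → (1 - Real.exp (-γ)) * f T ≤ f (S k) :=
  greedy_approx_submod_ratio_general f k γ hγ0 hγ1 hf0 hmono hratio S hS0 hgreedy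
end
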